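/- arXiv:1009.0297 — 4 statements merged into one kernel-verified Lean document; each statement's English description precedes it below -/
import Mathlib

section
/- For h > 0 and integers j, k, the derivative of the shifted sinc function evaluated at a node is (d/dx) S(j,h)(x) |_{x = kh} = 0 if j = k, and equals (1/h)·(-1)^{k-j}/(k-j) if j ≠ k. -/
noncomputable def sinc (z : ℝ) : ℝ :=
  if z = 0 then 1 else Real.sin (Real.pi * z) / (Real.pi * z)

noncomputable def S (k : ℤ) (h : ℝ) (x : ℝ) : ℝ := sinc ((x - k * h) / h)

/-!
`S j h` is `sinc` composed with the affine map `x ↦ (x - j h) / h`, so its derivative at `k h`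
is `h⁻¹ · sinc' (k - j)`. The function `sinc` is even, so `sinc' 0 = 0`; at a nonzero integer `n`
the quotient rule gives `sinc' n = cos (π n) / n = (-1) ^ n / n`, since `sin (π n) = 0`.
-/

open Real hiding sinc
open Filter Topology

theorem deriv_eq_zero_of_even {𝕜 F : Type*} [NontriviallyNormedField 𝕜] [NormedAddCommGroup F]
    [NormedSpace 𝕜 F] [IsAddTorsionFree F] {f : 𝕜 → F} (hf : ∀ x, f (-x) = f x) :
    deriv f 0 = 0 := by
  have h := deriv_comp_neg f 0
  simp only [hf, neg_zero] at h
  exact self_eq_neg.mp h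

theorem sinc_eq_real_sinc (z : ℝ) : sinc z = Real.sinc (π * z) := by
  simp [sinc, Real.sinc, pi_ne_zero]

theorem sinc_neg (z : ℝ) : sinc (-z) = sinc z := by
  rw [sinc_eq_real_sinc, sinc_eq_real_sinc, mul_neg, Real.sinc_neg]

theorem deriv_sinc_zero : deriv sinc 0 = 0 :=
  deriv_eq_zero_of_even sinc_neg

theorem hasDerivAt_sinc {z : ℝ} (hz : z ≠ 0) :
    HasDerivAt sinc (cos (π * z) / z - sin (π * z) / (π * z ^ 2)) z := by
  have hπz : π * z ≠ 0 := mul_ne_zero pi_ne_zero hz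
  have hlin : HasDerivAt (fun y => π * y) π z := by
    simpa using (hasDerivAt_id z).const_mul π
  have hquot := ((hasDerivAt_sin (π * z)).comp z hlin).div hlin hπz
  have hsinc : sinc =ᶠ[𝓝 z] fun y => sin (π * y) / (π * y) := by
    filter_upwards [isOpen_ne.mem_nhds hz] with y hy
    simp [sinc, hy]
  refine (hquot.congr_of_eventuallyEq hsinc).congr_deriv ?_
  simp only [Function.comp_apply]
  field_simp

theorem deriv_sinc_intCast {n : ℤ} (hn : n ≠ 0) : deriv sinc n = (-1) ^ n / n := by
  rw [(hasDerivAt_sinc (Int.cast_ne_zero.mpr hn)).deriv, mul_comm, sin_int_mul_pi,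
    cos_int_mul_pi, zero_div, sub_zero]

theorem deriv_S (j : ℤ) (h x : ℝ) : deriv (S j h) x = h⁻¹ * deriv sinc ((x - j * h) / h) := by
  have hcomp := deriv_comp_sub_const (fun y => sinc (h⁻¹ * y)) (j * h) x
  rw [deriv_comp_mul_left, smul_eq_mul] at hcomp
  unfold S
  simpa only [div_eq_inv_mul] using hcomp

theorem sinc_deriv_at_nodes (h : ℝ) (hh : 0 < h) (j k : ℤ) :
    deriv (S j h) (k * h) =
      if j = k then 0 else (1 / h) * ((-1 : ℝ) ^ (k - j) / (k - j)) := by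
  have hnode : ((k : ℝ) * h - j * h) / h = ((k - j : ℤ) : ℝ) := by
    push_cast
    field_simp
  rw [deriv_S, hnode]
  split_ifs with hjk
  · simp [hjk, deriv_sinc_zero]
  · rw [deriv_sinc_intCast (sub_ne_zero.mpr (Ne.symm hjk)), one_div, Int.cast_sub]
end

section
/- For h > 0 and integers j, k, the second derivative of the shifted sinc function evaluated at a node is (d²/dx²) S(j,h)(x) |_{x = kh} = -π²/(3h²) if j = k, and equals -(2/h²)·(-1)^{k-j}/(k-j)² if j ≠ k. -/
open Real hiding sinc
open intervalIntegral

theorem deriv_deriv_comp_mul_sub {𝕜 E : Type*} [NontriviallyNormedField 𝕜] [NormedAddCommGroup E]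
    [NormedSpace 𝕜 E] (f : 𝕜 → E) (c a x : 𝕜) :
    deriv (deriv fun y => f (c * (y - a))) x = c ^ 2 • deriv (deriv f) (c * (x - a)) := by
  have hderiv : ∀ g : 𝕜 → E,
      deriv (fun y => g (c * (y - a))) = fun y => c • deriv g (c * (y - a)) :=
    fun g => funext fun y => by
      rw [deriv_comp_sub_const (f := fun z => g (c * z)), deriv_comp_mul_left]
  rw [hderiv, deriv_fun_const_smul_field, hderiv, smul_smul, sq]

theorem hasDerivAt_integral_mul_comp_mul {w φ φ' : ℝ → ℝ} {K : ℝ} (hw : Continuous w)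
    (hφ : ∀ y, HasDerivAt φ (φ' y) y) (hφ' : Continuous φ') (hK : ∀ y, |φ' y| ≤ K)
    (a b c x : ℝ) :
    HasDerivAt (fun x => ∫ t in a..b, w t * φ (c * x * t))
      (∫ t in a..b, w t * (c * t) * φ' (c * x * t)) x := by
  have hφc : Continuous φ := continuous_iff_continuousAt.2 fun y => (hφ y).continuousAt
  refine (intervalIntegral.hasDerivAt_integral_of_dominated_loc_of_deriv_le
    (F := fun x t => w t * φ (c * x * t)) (F' := fun x t => w t * (c * t) * φ' (c * x * t))
    (bound := fun t => |w t * (c * t)| * K) Filter.univ_mem ?_ ?_ ?_ ?_ ?_ ?_).2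
  · exact Filter.Eventually.of_forall fun x =>
      (by fun_prop : Continuous fun t => w t * φ (c * x * t)).aestronglyMeasurable
  · exact (by fun_prop : Continuous fun t => w t * φ (c * x * t)).intervalIntegrable a b
  · exact (by fun_prop : Continuous fun t => w t * (c * t) * φ' (c * x * t)).aestronglyMeasurable
  · refine Filter.Eventually.of_forall fun t _ y _ => ?_
    rw [Real.norm_eq_abs, abs_mul]
    exact mul_le_mul_of_nonneg_left (hK _) (abs_nonneg _)
  · exact (by fun_prop : Continuous fun t => |w t * (c * t)| * K).intervalIntegrable a b
  · refine Filter.Eventually.of_forall fun t _ y _ => ?_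
    have hinner : HasDerivAt (fun y => c * y * t) (c * t) y := by
      simpa using ((hasDerivAt_id y).const_mul c).mul_const t
    exact (((hφ _).comp y hinner).const_mul (w t)).congr_deriv (by ring)

theorem sinc_eq_integral (x : ℝ) : sinc x = ∫ t in (0 : ℝ)..1, cos (π * x * t) := by
  rcases eq_or_ne x 0 with rfl | hx
  · simp [sinc]
  · have hπx : π * x ≠ 0 := mul_ne_zero pi_ne_zero hx
    rw [sinc, if_neg hx, integral_comp_mul_left cos hπx, integral_cos]
    simp [div_eq_inv_mul]

theorem hasDerivAt_sinc_s3 (x : ℝ) :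
    HasDerivAt sinc (∫ t in (0 : ℝ)..1, π * t * -sin (π * x * t)) x := by
  have h := hasDerivAt_integral_mul_comp_mul (w := fun _ => 1) continuous_const hasDerivAt_cos
    continuous_sin.neg (fun y => (abs_neg (sin y)).trans_le (abs_sin_le_one y)) 0 1 π x
  simpa only [one_mul, ← sinc_eq_integral] using h

theorem deriv_deriv_sinc (x : ℝ) :
    deriv (deriv sinc) x = -π ^ 2 * ∫ t in (0 : ℝ)..1, t ^ 2 * cos (π * x * t) := by
  have hderiv : deriv sinc = fun x => ∫ t in (0 : ℝ)..1, π * t * -sin (π * x * t) :=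
    funext fun x => (hasDerivAt_sinc_s3 x).deriv
  have h := hasDerivAt_integral_mul_comp_mul (w := fun t => π * t) (φ := fun y => -sin y)
    (by fun_prop) (fun y => (hasDerivAt_sin y).neg) continuous_cos.neg
    (fun y => (abs_neg (cos y)).trans_le (abs_cos_le_one y)) 0 1 π x
  rw [hderiv, h.deriv, ← integral_const_mul]
  congr 1 with t
  ring

theorem integral_sq_mul_cos_mul {c : ℝ} (hc : c ≠ 0) :
    ∫ t in (0 : ℝ)..1, t ^ 2 * cos (c * t) =
      sin c / c + 2 * cos c / c ^ 2 - 2 * sin c / c ^ 3 := by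
  have hprim : ∀ t ∈ Set.uIcc (0 : ℝ) 1,
      HasDerivAt (fun t => t ^ 2 * sin (c * t) / c + 2 * t * cos (c * t) / c ^ 2
        - 2 * sin (c * t) / c ^ 3) (t ^ 2 * cos (c * t)) t := by
    intro t _
    have hct : HasDerivAt (fun t => c * t) c t := by simpa using (hasDerivAt_id t).const_mul c
    have h := ((((hasDerivAt_pow 2 t).mul hct.sin).div_const c).add
      ((((hasDerivAt_id t).const_mul 2).mul hct.cos).div_const (c ^ 2))).sub
      ((hct.sin.const_mul 2).div_const (c ^ 3))
    refine h.congr_deriv ?_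
    simp only [id, Nat.cast_ofNat]
    field_simp
    ring
  rw [integral_eq_sub_of_hasDerivAt hprim (Continuous.intervalIntegrable (by fun_prop) 0 1)]
  simp

theorem deriv_deriv_sinc_intCast (n : ℤ) :
    deriv (deriv sinc) n = if n = 0 then -π ^ 2 / 3 else -2 * (-1 : ℝ) ^ n / (n : ℝ) ^ 2 := by
  rw [deriv_deriv_sinc]
  split_ifs with hn
  · norm_num [hn, integral_pow, div_eq_mul_inv]
  · have hπn : π * n ≠ 0 := mul_ne_zero pi_ne_zero (Int.cast_ne_zero.2 hn)
    rw [integral_sq_mul_cos_mul hπn, mul_comm π, sin_int_mul_pi, cos_int_mul_pi]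
    field_simp
    ring

theorem sinc_deriv2_at_nodes_general (h : ℝ) (j k : ℤ) :
    deriv (deriv (S j h)) (k * h) =
      if j = k then -Real.pi ^ 2 / (3 * h ^ 2)
      else (1 / h ^ 2) * (-2 * (-1 : ℝ) ^ (k - j) / ((k : ℝ) - j) ^ 2) := by
  have hS : S j h = fun x => sinc (h⁻¹ * (x - j * h)) := funext fun x => by
    rw [S, div_eq_inv_mul]
  rw [hS, deriv_deriv_comp_mul_sub, smul_eq_mul]
  rcases eq_or_ne h 0 with rfl | hh
  -- `x / 0 = 0` makes `S j 0` constant and both sides `0`.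
  · simp
  have hnode : h⁻¹ * (k * h - j * h) = ((k - j : ℤ) : ℝ) := by
    push_cast
    field_simp
  rw [hnode, deriv_deriv_sinc_intCast]
  simp only [sub_eq_zero, eq_comm (a := k)]
  split_ifs
  · field_simp
  · push_cast
    field_simp

theorem sinc_deriv2_at_nodes (h : ℝ) (hh : 0 < h) (j k : ℤ) :
    deriv (deriv (S j h)) (k * h) =
      if j = k then -Real.pi ^ 2 / (3 * h ^ 2)
      else (1 / h ^ 2) * (-2 * (-1 : ℝ) ^ (k - j) / ((k : ℝ) - j) ^ 2) :=
  sinc_deriv2_at_nodes_general h j k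
end

section
/- For h > 0 and a nonzero integer k, the limit as x → 0 of (1/x)·(d/dx)[S(k,h)(x) + S(-k,h)(x)] equals -4·(-1)^k/(h²k²). -/
/-!
Since `sin (π (x / h ∓ k)) = (-1) ^ k * sin (π x / h)`, away from `± k h` the pair
`S k h + S (-k) h` is the product of `f y = sin (π y / h)` and
`g y = (-1) ^ k h / π * ((y - k h)⁻¹ + (y + k h)⁻¹)`, both vanishing at `0`.
For such a product `(f g)' x / x = f' x * (g x / x) + (f x / x) * g' x → 2 f'(0) g'(0)`,
and `f'(0) = π / h`, `g'(0) = -2 (-1) ^ k / (π h k ^ 2)`.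
-/

open Filter Topology Real

section

variable {𝕜 : Type*} [NontriviallyNormedField 𝕜] {f g : 𝕜 → 𝕜}

theorem tendsto_div_self_of_hasDerivAt {f' : 𝕜} (hf : HasDerivAt f f' 0) (hf0 : f 0 = 0) :
    Tendsto (fun x => f x / x) (𝓝[≠] 0) (𝓝 f') :=
  (hasDerivAt_iff_tendsto_slope.mp hf).congr fun x => by simp [slope_def_field, hf0]

theorem ContDiffAt.tendsto_deriv_nhdsNE (hf : ContDiffAt 𝕜 1 f 0) :
    Tendsto (deriv f) (𝓝[≠] 0) (𝓝 (deriv f 0)) :=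
  (hf.derivWithin (m := 0) le_rfl).continuousAt.tendsto.mono_left nhdsWithin_le_nhds

theorem tendsto_deriv_mul_div_self (hf : ContDiffAt 𝕜 1 f 0) (hg : ContDiffAt 𝕜 1 g 0)
    (hf0 : f 0 = 0) (hg0 : g 0 = 0) :
    Tendsto (fun x => deriv (fun y => f y * g y) x / x) (𝓝[≠] 0)
      (𝓝 (2 * deriv f 0 * deriv g 0)) := by
  have hderiv : ∀ᶠ x in 𝓝 (0 : 𝕜),
      deriv (fun y => f y * g y) x = deriv f x * g x + f x * deriv g x := by
    filter_upwards [hf.eventually (by simp), hg.eventually (by simp)] with x hfx hgx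
    exact deriv_mul (hfx.differentiableAt one_ne_zero) (hgx.differentiableAt one_ne_zero)
  have hf_slope :=
    tendsto_div_self_of_hasDerivAt (hf.differentiableAt one_ne_zero).hasDerivAt hf0
  have hg_slope :=
    tendsto_div_self_of_hasDerivAt (hg.differentiableAt one_ne_zero).hasDerivAt hg0
  rw [two_mul, add_mul]
  refine ((hf.tendsto_deriv_nhdsNE.mul hg_slope).add
    (hf_slope.mul hg.tendsto_deriv_nhdsNE)).congr' ?_
  filter_upwards [eventually_nhdsWithin_of_eventually_nhds hderiv] with x hx
  rw [hx]
  ring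

end

theorem sinc_sub_intCast (z : ℝ) (n : ℤ) (hz : z ≠ n) :
    _root_.sinc (z - n) = (-1) ^ n * sin (π * z) / (π * (z - n)) := by
  rw [_root_.sinc, if_neg (sub_ne_zero.mpr hz), mul_sub, mul_comm π (n : ℝ), sin_sub_int_mul_pi]

theorem S_eq {k : ℤ} {h x : ℝ} (hh : h ≠ 0) (hx : x ≠ k * h) :
    S k h x = (-1) ^ k * h / π * sin (π * x / h) / (x - k * h) := by
  have hz : x / h ≠ k := fun hc => hx (by rw [← hc, div_mul_cancel₀ x hh])
  have hxk : x - k * h ≠ 0 := sub_ne_zero.mpr hx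
  rw [S, sub_div, mul_div_cancel_right₀ _ hh, sinc_sub_intCast _ _ hz]
  field_simp

theorem S_add_S_neg {k : ℤ} {h x : ℝ} (hh : h ≠ 0) (h₁ : x ≠ k * h) (h₂ : x ≠ -(k * h)) :
    S k h x + S (-k) h x =
      sin (π * x / h) * ((-1) ^ k * h / π * ((x - k * h)⁻¹ + (x + k * h)⁻¹)) := by
  have h₂' : x ≠ ((-k : ℤ) : ℝ) * h := by push_cast; rwa [neg_mul]
  rw [S_eq hh h₁, S_eq hh h₂', zpow_neg, ← inv_zpow, inv_neg, inv_one]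
  push_cast
  ring

theorem sinc_singular_limit_pair (h : ℝ) (hh : 0 < h) (k : ℤ) (hk : k ≠ 0) :
    Filter.Tendsto (fun x : ℝ => (1 / x) * deriv (fun y => S k h y + S (-k) h y) x)
      (nhdsWithin 0 {0}ᶜ)
      (nhds (-4 * (-1 : ℝ) ^ k / (h ^ 2 * (k : ℝ) ^ 2))) := by
  set a : ℝ := k * h
  set c : ℝ := (-1) ^ k * h / π
  have ha : a ≠ 0 := mul_ne_zero (Int.cast_ne_zero.mpr hk) hh.ne'
  set f : ℝ → ℝ := fun y => sin (π * y / h)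
  set g : ℝ → ℝ := fun y => c * ((y - a)⁻¹ + (y + a)⁻¹)
  have hpair : (fun y => S k h y + S (-k) h y) =ᶠ[𝓝 0] fun y => f y * g y := by
    filter_upwards [eventually_ne_nhds ha.symm, eventually_ne_nhds (neg_ne_zero.mpr ha).symm]
      with y h₁ h₂
    exact S_add_S_neg hh.ne' h₁ h₂
  have hf : HasDerivAt f (π / h) 0 := by
    simpa using ((hasDerivAt_id (0 : ℝ)).const_mul π |>.div_const h).sin
  have hg : HasDerivAt g (c * (-1 / a ^ 2 + -1 / a ^ 2)) 0 := by
    have h₁ := ((hasDerivAt_id (0 : ℝ)).sub_const a).inv (by simpa using ha)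
    have h₂ := ((hasDerivAt_id (0 : ℝ)).add_const a).inv (by simpa using ha)
    simpa using (h₁.add h₂).const_mul c
  have hlim := tendsto_deriv_mul_div_self (f := f) (g := g) (by fun_prop)
    (by fun_prop (disch := simpa)) (by simp [f]) (by simp [g])
  rw [hf.deriv, hg.deriv] at hlim
  convert hlim.congr' ?_ using 2
  · simp only [a, c]
    field_simp
    ring
  · filter_upwards [eventually_nhdsWithin_of_eventually_nhds hpair.deriv] with x hx
    rw [hx, one_div_mul_eq_div]
end

section
/- Suppose û : ℝ → ℂ is integrable and satisfies |û(k)| ≤ K e^{-ν|k|} for some constants K, ν > 0. Then the function u(x) = ∫_{-∞}^{∞} e^{ixk} û(k) dk extends to a function analytic on the horizontal strip D_ν = {z ∈ ℂ : |Im z| < ν}. -/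
/-!
Differentiation under the integral sign. Since `‖exp (i z k)‖ ≤ exp (|Im z| |k|)`, near a point `z₀`
of the strip the integrand is dominated by `K exp (-δ |k|)` with `δ = (ν - |Im z₀|) / 2`, and its
`z`-derivative `i k exp (i z k) û(k)` by `(2K / δ) exp (-δ |k| / 2)`. So the integral is complex
differentiable on the open strip, hence analytic there.
-/

open Complex MeasureTheory Metric Set
open scoped Real

lemma integrable_exp_neg_mul_abs {a : ℝ} (ha : 0 < a) :
    Integrable fun x : ℝ => rexp (-a * |x|) := by
  rw [← integrableOn_univ, ← Iic_union_Ioi (a := (0 : ℝ)), integrableOn_union]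
  constructor
  · refine (integrableOn_exp_mul_Iic ha 0).congr_fun (fun x hx => ?_) measurableSet_Iic
    rw [abs_of_nonpos hx, mul_neg, neg_mul, neg_neg]
  · refine (integrableOn_exp_mul_Ioi (neg_lt_zero.2 ha) 0).congr_fun (fun x hx => ?_)
      measurableSet_Ioi
    rw [abs_of_pos hx]

lemma norm_cexp_I_mul_le (z : ℂ) (k : ℝ) : ‖cexp (I * z * k)‖ ≤ rexp (|z.im| * |k|) := by
  rw [norm_exp]
  gcongr
  simpa [abs_mul] using neg_le_abs (z.im * k)

lemma abs_mul_exp_neg_mul_abs_le {δ : ℝ} (hδ : 0 < δ) (k : ℝ) :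
    |k| * rexp (-δ * |k|) ≤ 2 / δ * rexp (-(δ / 2) * |k|) := by
  have hk : |k| ≤ 2 / δ * rexp (δ / 2 * |k|) := by
    rw [div_mul_eq_mul_div, le_div_iff₀ hδ]
    linarith [Real.add_one_le_exp (δ / 2 * |k|)]
  calc |k| * rexp (-δ * |k|) ≤ 2 / δ * rexp (δ / 2 * |k|) * rexp (-δ * |k|) := by gcongr
    _ = 2 / δ * rexp (-(δ / 2) * |k|) := by rw [mul_assoc, ← Real.exp_add]; ring_nf

section FourierLaplace

variable {E : Type*} [NormedAddCommGroup E] [NormedSpace ℂ E]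

noncomputable def fourierLaplace (g : ℝ → E) (z : ℂ) : E :=
  ∫ k : ℝ, cexp (I * z * k) • g k

variable {g : ℝ → E} {K ν : ℝ}

lemma hasDerivAt_cexp_I_mul_smul (v : E) (k : ℝ) (z : ℂ) :
    HasDerivAt (fun w : ℂ => cexp (I * w * k) • v) (cexp (I * z * k) • (I * k) • v) z := by
  have h := ((((hasDerivAt_id z).const_mul I).mul_const (k : ℂ)).cexp).smul_const v
  rw [smul_smul]
  simpa using h

lemma norm_cexp_I_mul_smul_le (hg : ∀ k, ‖g k‖ ≤ K * rexp (-ν * |k|)) (z : ℂ) (k : ℝ) :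
    ‖cexp (I * z * k) • g k‖ ≤ K * rexp (-(ν - |z.im|) * |k|) := by
  rw [norm_smul]
  calc _ ≤ rexp (|z.im| * |k|) * (K * rexp (-ν * |k|)) :=
        mul_le_mul (norm_cexp_I_mul_le z k) (hg k) (norm_nonneg _) (Real.exp_nonneg _)
    _ = K * rexp (-(ν - |z.im|) * |k|) := by rw [mul_left_comm, ← Real.exp_add]; ring_nf

lemma norm_cexp_I_mul_smul_le_of_mem_ball (hg : ∀ k, ‖g k‖ ≤ K * rexp (-ν * |k|)) {z₀ z : ℂ}
    (hz : z ∈ ball z₀ ((ν - |z₀.im|) / 2)) (k : ℝ) :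
    ‖cexp (I * z * k) • g k‖ ≤ K * rexp (-((ν - |z₀.im|) / 2) * |k|) := by
  have hK : 0 ≤ K := by simpa using (norm_nonneg _).trans (hg 0)
  have him : |z.im| - |z₀.im| < (ν - |z₀.im|) / 2 :=
    calc |z.im| - |z₀.im| ≤ |(z - z₀).im| := by rw [sub_im]; exact abs_sub_abs_le_abs_sub _ _
      _ ≤ ‖z - z₀‖ := abs_im_le_norm _
      _ < _ := mem_ball_iff_norm.1 hz
  refine (norm_cexp_I_mul_smul_le hg z k).trans ?_
  gcongr
  linarith

theorem hasDerivAt_fourierLaplace (hg_meas : AEStronglyMeasurable g)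
    (hg : ∀ k, ‖g k‖ ≤ K * rexp (-ν * |k|)) {z₀ : ℂ} (hz₀ : |z₀.im| < ν) :
    HasDerivAt (fourierLaplace g) (fourierLaplace (fun k => (I * k) • g k) z₀) z₀ := by
  set δ := (ν - |z₀.im|) / 2
  have hδ : 0 < δ := half_pos (sub_pos.2 hz₀)
  have decay : ∀ z ∈ ball z₀ δ, ∀ k : ℝ, ‖cexp (I * z * k) • g k‖ ≤ K * rexp (-δ * |k|) :=
    fun _ hz => norm_cexp_I_mul_smul_le_of_mem_ball hg hz
  have meas : ∀ z : ℂ, AEStronglyMeasurable fun k : ℝ => cexp (I * z * k) • g k := fun z =>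
    (Continuous.aestronglyMeasurable (by fun_prop)).smul hg_meas
  have deriv_decay : ∀ z ∈ ball z₀ δ, ∀ k : ℝ,
      ‖cexp (I * z * k) • (I * k) • g k‖ ≤ K * (2 / δ) * rexp (-(δ / 2) * |k|) := by
    intro z hz k
    have hK : 0 ≤ K := by simpa using (norm_nonneg _).trans (hg 0)
    calc ‖cexp (I * z * k) • (I * k) • g k‖ = |k| * ‖cexp (I * z * k) • g k‖ := by
          rw [smul_comm, norm_smul]; simp
      _ ≤ |k| * (K * rexp (-δ * |k|)) := by gcongr; exact decay z hz k
      _ = K * (|k| * rexp (-δ * |k|)) := by ring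
      _ ≤ K * (2 / δ * rexp (-(δ / 2) * |k|)) :=
          mul_le_mul_of_nonneg_left (abs_mul_exp_neg_mul_abs_le hδ k) hK
      _ = K * (2 / δ) * rexp (-(δ / 2) * |k|) := by ring
  exact (hasDerivAt_integral_of_dominated_loc_of_deriv_le (ball_mem_nhds z₀ hδ)
    (.of_forall meas)
    (((integrable_exp_neg_mul_abs hδ).const_mul K).mono' (meas z₀)
      (ae_of_all _ (decay z₀ (mem_ball_self hδ))))
    ((Continuous.aestronglyMeasurable (by fun_prop)).smul
      ((Continuous.aestronglyMeasurable (by fun_prop)).smul hg_meas))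
    (ae_of_all _ fun k z hz => deriv_decay z hz k)
    ((integrable_exp_neg_mul_abs (half_pos hδ)).const_mul _)
    (ae_of_all _ fun k z _ => hasDerivAt_cexp_I_mul_smul (g k) k z)).2

theorem analyticOnNhd_fourierLaplace [CompleteSpace E] (hg_meas : AEStronglyMeasurable g)
    (hg : ∀ k, ‖g k‖ ≤ K * rexp (-ν * |k|)) :
    AnalyticOnNhd ℂ (fourierLaplace g) {z : ℂ | |z.im| < ν} :=
  DifferentiableOn.analyticOnNhd
    (fun _ hz => (hasDerivAt_fourierLaplace hg_meas hg hz).differentiableAt.differentiableWithinAt)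
    (isOpen_lt (by fun_prop) continuous_const)

end FourierLaplace

theorem analytic_extension_of_fourier_decay_general
    (uhat : ℝ → ℂ) (K ν : ℝ)
    (hmeas : Measurable uhat)
    (hbound : ∀ k : ℝ, ‖uhat k‖ ≤ K * Real.exp (-ν * |k|)) :
    ∃ U : ℂ → ℂ,
      AnalyticOnNhd ℂ U {z : ℂ | |z.im| < ν} ∧
      ∀ x : ℝ, U (x : ℂ) = ∫ k : ℝ, Complex.exp (Complex.I * x * k) * uhat k :=
  ⟨fourierLaplace uhat, analyticOnNhd_fourierLaplace hmeas.aestronglyMeasurable hbound,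
    fun _ => rfl⟩

theorem analytic_extension_of_fourier_decay
    (uhat : ℝ → ℂ) (K ν : ℝ) (hK : 0 < K) (hν : 0 < ν)
    (hmeas : Measurable uhat)
    (hbound : ∀ k : ℝ, ‖uhat k‖ ≤ K * Real.exp (-ν * |k|)) :
    ∃ U : ℂ → ℂ,
      AnalyticOnNhd ℂ U {z : ℂ | |z.im| < ν} ∧
      ∀ x : ℝ, U (x : ℂ) = ∫ k : ℝ, Complex.exp (Complex.I * x * k) * uhat k :=
  analytic_extension_of_fourier_decay_general uhat K ν hmeas hbound
end
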